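/- arXiv:1410.4378 — 2 statements merged into one kernel-verified Lean document; each statement's English description precedes it below -/
import Mathlib

section
/- (Privacy bound for the toric secret sharing scheme.) Let U ⊆ H be a subset, set −H∖−U = {−m : m ∈ H, m ∉ U}, and let z' be a natural number such that every nonzero g ∈ 𝔽_q<−H∖−U> vanishes at no more than z' points of the torus (𝔽_q^*)^r. Fix P_0 ∈ (𝔽_q^*)^r and let A ⊆ (𝔽_q^*)^r ∖ {P_0} with |A| ≤ (q−1)^r − z' − 2. Then for every f ∈ 𝔽_q<U> and every s ∈ 𝔽_q there exists g ∈ 𝔽_q<U> with g(P) = f(P) for all P ∈ A and g(P_0) = s; i.e., any (q−1)^r − z' − 2 shares reveal no information about the secret. -/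
open scoped BigOperators

/-- Evaluation of a Laurent polynomial (given by its finitely supported coefficient
function on exponent vectors in `ℤ^r`) at a point of the torus `(Kˣ)^r`. -/
noncomputable def laurentEval {K : Type} [Field K] {r : ℕ}
    (f : (Fin r → ℤ) →₀ K) (P : Fin r → Kˣ) : K :=
  ∑ u ∈ f.support, f u * ∏ i, ((P i ^ u i : Kˣ) : K)

/-- The hypercube `H = {0, 1, …, q-2}^r ⊂ ℤ^r`. -/
def Hset (q r : ℕ) : Set (Fin r → ℤ) := {m | ∀ i, 0 ≤ m i ∧ m i ≤ (q : ℤ) - 2}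

/-!
Interpolation on `B = A ∪ {P₀}` from `𝔽_q<U>` fails only if some nonzero `c ∈ 𝔽_q^B` is
orthogonal to every monomial `X^u`, `u ∈ U`. Extend `c` by zero to the torus. By orthogonality of
characters, `g = ∑_{m ∈ H} (∑_Q c(Q) Q^m) X^{-m}` satisfies `g(P) = (-1)^r c(P)`; its coefficients
at `-u`, `u ∈ U`, are the vanishing pairings, so `0 ≠ g ∈ 𝔽_q<-H∖-U>`. But `g` vanishes off `B`,
i.e. at `(q-1)^r - |A| - 1 > z'` points, which is impossible.
-/

open Finset

section Duality

variable {K : Type*} [Field K] {ι : Type*} [Fintype ι] [DecidableEq ι]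

theorem exists_ne_zero_forall_sum_mul_eq_zero {W : Submodule K (ι → K)} (hW : W ≠ ⊤) :
    ∃ c : ι → K, c ≠ 0 ∧ ∀ w ∈ W, ∑ i, c i * w i = 0 := by
  obtain ⟨ψ, hψ, hWψ⟩ := W.exists_le_ker_of_lt_top hW.lt_top
  have hψc : ∀ w, ψ w = ∑ i, ψ (Pi.single i 1) * w i := fun w => by
    rw [LinearMap.pi_apply_eq_sum_univ ψ w]
    refine sum_congr rfl fun i _ => ?_
    have : (fun j => if i = j then (1 : K) else 0) = Pi.single i 1 := by
      ext j; simp [Pi.single_apply, eq_comm]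
    rw [this, smul_eq_mul, mul_comm]
  refine ⟨fun i => ψ (Pi.single i 1), fun hc => hψ (LinearMap.ext fun w => ?_), fun w hw => ?_⟩
  · rw [hψc w]
    exact sum_eq_zero fun i _ => by simp [show ψ (Pi.single i 1) = 0 from congrFun hc i]
  · rw [← hψc]; exact hWψ hw

theorem exists_mem_forall_eq_of_orthogonal (W : Submodule K (ι → K)) (S : Finset ι)
    (h : ∀ c : ι → K, (∀ i ∉ S, c i = 0) → (∀ w ∈ W, ∑ i, c i * w i = 0) → c = 0)
    (t : ι → K) : ∃ w ∈ W, ∀ i ∈ S, w i = t i := by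
  let Z : Submodule K (ι → K) := ⨅ i ∈ S, LinearMap.ker (LinearMap.proj i)
  have hmemZ : ∀ z, z ∈ Z ↔ ∀ i ∈ S, z i = 0 := by simp [Z, Submodule.mem_iInf]
  have hWZ : W ⊔ Z = ⊤ := by
    by_contra hne
    obtain ⟨c, hc, horth⟩ := exists_ne_zero_forall_sum_mul_eq_zero hne
    refine hc (h c (fun i hi => ?_) fun w hw => horth w (Submodule.mem_sup_left hw))
    have hsingle : Pi.single i 1 ∈ Z := (hmemZ _).2 fun j hj => by
      simp [show j ≠ i by rintro rfl; exact hi hj]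
    simpa [Pi.single_apply] using horth _ (Submodule.mem_sup_right hsingle)
  obtain ⟨w, hw, z, hz, rfl⟩ := Submodule.mem_sup.1 (hWZ ▸ Submodule.mem_top (x := t))
  exact ⟨w, hw, fun i hi => by simp [(hmemZ z).1 hz i hi]⟩

end Duality

section CharacterSums

variable {K : Type*} [Field K] [Fintype K] [DecidableEq K]

theorem sum_range_card_sub_one_pow_units (x : Kˣ) :
    ∑ k ∈ range (Fintype.card K - 1), (x : K) ^ k = if x = 1 then -1 else 0 := by
  split_ifs with hx
  · have : 1 ≤ Fintype.card K := Fintype.card_pos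
    simp [hx, Nat.cast_sub this]
  · rw [geom_sum_eq (by simpa using hx), FiniteField.pow_card_sub_one_eq_one _ x.ne_zero]
    simp

theorem sum_piFinset_prod_pow_units {ι : Type*} [Fintype ι] [DecidableEq ι] (x : ι → Kˣ) :
    ∑ v ∈ Fintype.piFinset fun _ : ι => range (Fintype.card K - 1), ∏ i, (x i : K) ^ v i =
      if x = 1 then (-1) ^ Fintype.card ι else 0 := by
  rw [← prod_univ_sum]
  simp [sum_range_card_sub_one_pow_units, prod_ite_zero, funext_iff]

end CharacterSums

section Torus

variable {K : Type} [Field K] {r : ℕ}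

variable (K r) in
noncomputable def laurentEvalLinear : ((Fin r → ℤ) →₀ K) →ₗ[K] (Fin r → Kˣ) → K :=
  LinearMap.pi fun P => Finsupp.linearCombination K fun u => ∏ i, ((P i ^ u i : Kˣ) : K)

@[simp]
theorem laurentEvalLinear_apply (f : (Fin r → ℤ) →₀ K) (P : Fin r → Kˣ) :
    laurentEvalLinear K r f P = laurentEval f P := by
  simp [laurentEvalLinear, laurentEval, Finsupp.linearCombination_apply, Finsupp.sum, mul_comm]

theorem laurentEval_single (u : Fin r → ℤ) (a : K) (P : Fin r → Kˣ) :
    laurentEval (Finsupp.single u a) P = a * ∏ i, ((P i ^ u i : Kˣ) : K) := by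
  simp [← laurentEvalLinear_apply, laurentEvalLinear]

variable [Fintype K] [DecidableEq K]

noncomputable def torusInterpolant (c : (Fin r → Kˣ) → K) : (Fin r → ℤ) →₀ K :=
  ∑ v ∈ Fintype.piFinset fun _ => range (Fintype.card K - 1),
    Finsupp.single (fun i => -(v i : ℤ)) (∑ Q, c Q * ∏ i, (Q i : K) ^ v i)

theorem laurentEval_torusInterpolant (c : (Fin r → Kˣ) → K) (P : Fin r → Kˣ) :
    laurentEval (torusInterpolant c) P = (-1) ^ r * c P := by
  rw [← laurentEvalLinear_apply, torusInterpolant, map_sum, Finset.sum_apply]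
  calc ∑ v ∈ Fintype.piFinset fun _ => range (Fintype.card K - 1),
        laurentEvalLinear K r (Finsupp.single (fun i => -(v i : ℤ))
          (∑ Q, c Q * ∏ i, (Q i : K) ^ v i)) P
      = ∑ Q, c Q * ∑ v ∈ Fintype.piFinset fun _ => range (Fintype.card K - 1),
          ∏ i, (((Q * P⁻¹) i : Kˣ) : K) ^ v i := by
        simp only [laurentEvalLinear_apply, laurentEval_single, sum_mul, mul_sum]
        rw [sum_comm]
        refine sum_congr rfl fun Q _ => sum_congr rfl fun v _ => ?_
        simp [mul_assoc, mul_pow, prod_mul_distrib, prod_inv_distrib]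
    _ = ∑ Q, c Q * if Q = P then (-1) ^ r else 0 := by
        simp only [sum_piFinset_prod_pow_units, Fintype.card_fin, mul_inv_eq_one]
    _ = (-1) ^ r * c P := by simp [mul_comm]

theorem support_torusInterpolant_subset (c : (Fin r → Kˣ) → K) :
    ↑(torusInterpolant c).support ⊆ (fun m => -m) ''
      {m ∈ Hset (Fintype.card K) r | ∑ Q, c Q * ∏ i, ((Q i ^ m i : Kˣ) : K) ≠ 0} := by
  intro m hm
  obtain ⟨v, hv, hmv⟩ := mem_biUnion.1 (Finsupp.support_finsetSum hm)
  rw [Finsupp.mem_support_single] at hmv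
  refine ⟨fun i => v i, ⟨fun i => ⟨by positivity, ?_⟩, by simpa using hmv.2⟩, hmv.1.symm⟩
  have := mem_range.1 (Fintype.mem_piFinset.1 hv i)
  show (v i : ℤ) ≤ _
  omega

theorem card_zeros_le_of_forall_sum_mul_eq_zero {U : Set (Fin r → ℤ)} {z' : ℕ}
    (hz' : ∀ g : (Fin r → ℤ) →₀ K, ↑g.support ⊆ (fun m => -m) '' (Hset (Fintype.card K) r \ U) →
      g ≠ 0 → Nat.card {P : Fin r → Kˣ | laurentEval g P = 0} ≤ z')
    {c : (Fin r → Kˣ) → K} (hc : c ≠ 0)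
    (horth : ∀ u ∈ U, ∑ Q, c Q * ∏ i, ((Q i ^ u i : Kˣ) : K) = 0) :
    Nat.card {P | c P = 0} ≤ z' := by
  have heval := laurentEval_torusInterpolant c
  have hzeros : {P | laurentEval (torusInterpolant c) P = 0} = {P | c P = 0} := by
    ext P; simp [heval]
  have hne : torusInterpolant c ≠ 0 := fun h0 => hc <| funext fun P => by
    simpa [h0, laurentEval] using (heval P).symm
  have hsupp : ↑(torusInterpolant c).support ⊆ (fun m => -m) '' (Hset (Fintype.card K) r \ U) :=
    (support_torusInterpolant_subset c).trans <|
      Set.image_mono fun m hm => ⟨hm.1, fun hU => hm.2 (horth m hU)⟩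
  exact hzeros ▸ hz' _ hsupp hne

theorem eq_zero_of_forall_sum_mul_eq_zero_of_card_lt {U : Set (Fin r → ℤ)} {z' : ℕ}
    (hz' : ∀ g : (Fin r → ℤ) →₀ K, ↑g.support ⊆ (fun m => -m) '' (Hset (Fintype.card K) r \ U) →
      g ≠ 0 → Nat.card {P : Fin r → Kˣ | laurentEval g P = 0} ≤ z')
    {S : Finset (Fin r → Kˣ)} (hS : (S.card : ℤ) + z' < ((Fintype.card K : ℤ) - 1) ^ r)
    {c : (Fin r → Kˣ) → K} (hcS : ∀ P ∉ S, c P = 0)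
    (horth : ∀ u ∈ U, ∑ Q, c Q * ∏ i, ((Q i ^ u i : Kˣ) : K) = 0) : c = 0 := by
  by_contra hc
  have hzeros := card_zeros_le_of_forall_sum_mul_eq_zero hz' hc horth
  have hsub : (↑Sᶜ : Set (Fin r → Kˣ)) ⊆ {P | c P = 0} := fun P hP => hcS P (by simpa using hP)
  have hSc : Sᶜ.card ≤ Nat.card {P | c P = 0} := by
    rw [← Set.ncard_coe_finset, ← Nat.card_coe_set_eq]
    exact Nat.card_mono (Set.toFinite _) hsub
  have htorus : Fintype.card (Fin r → Kˣ) = (Fintype.card K - 1) ^ r := by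
    simp [Fintype.card_units]
  have hcount : (Fintype.card K - 1) ^ r ≤ S.card + z' := by
    have := S.card_le_univ
    rw [card_compl, htorus] at hSc
    omega
  have hq : ((Fintype.card K - 1 : ℕ) : ℤ) = Fintype.card K - 1 := by
    have := Fintype.card_pos (α := K)
    omega
  have : ((Fintype.card K : ℤ) - 1) ^ r ≤ S.card + z' := by
    rw [← hq]; exact_mod_cast hcount
  linarith

end Torus

theorem stmt8_general {K : Type} [Field K] [Fintype K]
    (q : ℕ) (hq : Fintype.card K = q) {r : ℕ}
    (U : Set (Fin r → ℤ))
    (z' : ℕ)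
    (hz' : ∀ g : (Fin r → ℤ) →₀ K, ↑g.support ⊆ (fun m => -m) '' (Hset q r \ U) →
      g ≠ 0 → Nat.card {P : Fin r → Kˣ | laurentEval g P = 0} ≤ z')
    (P₀ : Fin r → Kˣ) (A : Finset (Fin r → Kˣ)) (hP₀ : P₀ ∉ A)
    (hA : (A.card : ℤ) ≤ ((q : ℤ) - 1) ^ r - z' - 2)
    (f : (Fin r → ℤ) →₀ K) (s : K) :
    ∃ g : (Fin r → ℤ) →₀ K, ↑g.support ⊆ U ∧
      (∀ P ∈ A, laurentEval g P = laurentEval f P) ∧ laurentEval g P₀ = s := by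
  classical
  subst hq
  obtain ⟨_, ⟨g, hgU, rfl⟩, hg⟩ := exists_mem_forall_eq_of_orthogonal
    ((Finsupp.supported K K U).map (laurentEvalLinear K r)) (insert P₀ A)
    (fun c hcS horth => eq_zero_of_forall_sum_mul_eq_zero_of_card_lt hz'
      (by rw [card_insert_of_notMem hP₀]; push_cast; linarith) hcS fun u hu => by
        simpa [laurentEval_single] using
          horth _ (Submodule.mem_map_of_mem (Finsupp.single_mem_supported K 1 hu)))
    fun P => if P = P₀ then s else laurentEval f P
  refine ⟨g, (Finsupp.mem_supported K g).1 hgU, fun P hP => ?_, ?_⟩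
  · simpa [ne_of_mem_of_not_mem hP hP₀] using hg P (mem_insert_of_mem hP)
  · simpa using hg P₀ (mem_insert_self P₀ A)

/-- privacy bound: if every nonzero `g ∈ 𝔽_q<−H∖−U>` vanishes at no
more than `z'` torus points, then any `(q−1)^r − z' − 2` shares reveal nothing: for
any share set `A` of that size (avoiding `P₀`), any `f ∈ 𝔽_q<U>` and any desired
secret `s`, there is `g ∈ 𝔽_q<U>` with the same shares on `A` and `g(P₀) = s`. -/
theorem stmt8 {K : Type} [Field K] [Fintype K]
    (q : ℕ) (hq : Fintype.card K = q) {r : ℕ}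
    (U : Set (Fin r → ℤ)) (hUH : U ⊆ Hset q r)
    (z' : ℕ)
    (hz' : ∀ g : (Fin r → ℤ) →₀ K, ↑g.support ⊆ (fun m => -m) '' (Hset q r \ U) →
      g ≠ 0 → Nat.card {P : Fin r → Kˣ | laurentEval g P = 0} ≤ z')
    (P₀ : Fin r → Kˣ) (A : Finset (Fin r → Kˣ)) (hP₀ : P₀ ∉ A)
    (hA : (A.card : ℤ) ≤ ((q : ℤ) - 1) ^ r - z' - 2)
    (f : (Fin r → ℤ) →₀ K) (hf : ↑f.support ⊆ U) (s : K) :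
    ∃ g : (Fin r → ℤ) →₀ K, ↑g.support ⊆ U ∧
      (∀ P ∈ A, laurentEval g P = laurentEval f P) ∧ laurentEval g P₀ = s :=
  stmt8_general q hq U z' hz' P₀ A hP₀ hA f s
end

section
/- Let a, b be integers with 0 ≤ b ≤ a ≤ q−2 and q ≥ 3, let U = {(i,j) ∈ ℤ² : 0 ≤ j ≤ q−2, 0 ≤ i, and (q−2)·i ≤ a(q−2) + (b−a)·j}, let H = {0,…,q−2}², and set −H∖−U = {−m : m ∈ H, m ∉ U}. Then every nonzero g ∈ 𝔽_q<−H∖−U> vanishes at no more than (q−1)² − 1 − b points of the torus (𝔽_q^*)². -/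
open scoped BigOperators

/-!
Every exponent `-m` of `g` has `m ∈ H \ U`, which forces `m₁ ≥ b + 1`; so after multiplying by a
monomial, `g` is a polynomial of degree at most `q - 3 - b` in `X₁` and at most `q - 2` in `X₂`.
Since `q - 2 < q - 1 = |𝔽_q^*|`, there is a `y ∈ 𝔽_q^*` with `g(·, y) ≠ 0`, and `g(·, y)` has at
most `q - 3 - b` zeros. Hence at least `b + 2` points of the torus are not zeros of `g`.
-/

open Finset Polynomial

section OneVariable

variable {K ι : Type*} [Field K] [Fintype K] [DecidableEq K]

theorem card_filter_units_isRoot_le_natDegree {p : K[X]} (hp : p ≠ 0) :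
    #{x : Kˣ | p.eval (x : K) = 0} ≤ p.natDegree := by
  calc #{x : Kˣ | p.eval (x : K) = 0}
      ≤ p.roots.toFinset.card := by
        refine card_le_card_of_injOn Units.val (fun x hx => ?_) (fun x _ y _ => Units.ext)
        simpa [hp] using hx
    _ ≤ p.natDegree := (Multiset.toFinset_card_le _).trans (card_roots' p)

/-- After clearing the denominator `x ^ l`, the sum is a polynomial of degree at most `u - l`
whose coefficient at `n - l` is the displayed nonzero sum. -/
theorem card_filter_sum_mul_zpow_eq_zero_le {s : Finset ι} {c : ι → K} {k : ι → ℤ} {l u : ℤ}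
    (hk : ∀ i ∈ s, l ≤ k i ∧ k i ≤ u) {n : ℤ} (hn : ∑ i ∈ s with k i = n, c i ≠ 0) :
    (#{x : Kˣ | ∑ i ∈ s, c i * ((x ^ k i : Kˣ) : K) = 0} : ℤ) ≤ u - l := by
  obtain ⟨j, hj, -⟩ := exists_ne_zero_of_sum_ne_zero hn
  obtain ⟨hjs, rfl⟩ := mem_filter.mp hj
  set p : K[X] := ∑ i ∈ s, C (c i) * X ^ (k i - l).toNat
  have hcoeff : p.coeff (k j - l).toNat = ∑ i ∈ s with k i = k j, c i := by
    simp only [p, finsetSum_coeff, coeff_C_mul, coeff_X_pow, sum_filter, mul_ite, mul_one,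
      mul_zero]
    refine sum_congr rfl fun i hi => if_congr ?_ rfl rfl
    have := hk i hi
    have := hk j hjs
    omega
  have hp : p ≠ 0 := fun h => hn (by rw [← hcoeff, h, coeff_zero])
  have hdeg : p.natDegree ≤ (u - l).toNat :=
    natDegree_sum_le_of_forall_le _ _ fun i hi =>
      (natDegree_C_mul_X_pow_le _ _).trans (by have := hk i hi; omega)
  have heval (x : Kˣ) :
      p.eval (x : K) = (x : K) ^ (-l) * ∑ i ∈ s, c i * ((x ^ k i : Kˣ) : K) := by
    simp only [p, eval_finsetSum, eval_mul, eval_C, eval_pow, eval_X, mul_sum]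
    refine sum_congr rfl fun i hi => ?_
    have hx : (x : K) ≠ 0 := x.ne_zero
    rw [← zpow_natCast, Int.toNat_of_nonneg (by linarith [hk i hi]), zpow_sub₀ hx,
      Units.val_zpow_eq_zpow_val, zpow_neg]
    ring
  have hzeros : #{x : Kˣ | ∑ i ∈ s, c i * ((x ^ k i : Kˣ) : K) = 0} ≤
      #{x : Kˣ | p.eval (x : K) = 0} :=
    card_le_card fun x => by simp +contextual [heval]
  have := hk j hjs
  have := (hzeros.trans (card_filter_units_isRoot_le_natDegree hp)).trans hdeg
  omega

end OneVariable

theorem card_filter_add_card_filter_not_comp_le {α β : Type*} [Fintype α] [Fintype β]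
    [DecidableEq α] (p : α → Prop) [DecidablePred p] {f : β → α} (hf : Function.Injective f) :
    #{a | p a} + #{b | ¬ p (f b)} ≤ Fintype.card α := by
  rw [← card_image_of_injective _ hf, ← card_union_of_disjoint]
  · exact card_le_univ _
  · exact disjoint_left.mpr fun a ha ha' => by
      obtain ⟨b, hb, rfl⟩ := mem_image.mp ha'
      exact (mem_filter.mp hb).2 (mem_filter.mp ha).2

theorem laurentEval_pair {K : Type} [Field K] (g : (Fin 2 → ℤ) →₀ K) (x y : Kˣ) :
    laurentEval g ![x, y] =
      ∑ e ∈ g.support, g e * ((y ^ e 1 : Kˣ) : K) * ((x ^ e 0 : Kˣ) : K) := by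
  simp only [laurentEval, Fin.prod_univ_two, Matrix.cons_val_zero, Matrix.cons_val_one]
  exact sum_congr rfl fun _ _ => by ring

section TwoVariables

variable {K : Type} [Field K] [Fintype K] [DecidableEq K]

/-- The coefficient of some power of `X₁` is a nonzero Laurent polynomial in `X₂` of exponent
spread less than `q - 1`, so it does not vanish at some `y`. -/
theorem exists_card_filter_laurentEval_eq_zero_le {g : (Fin 2 → ℤ) →₀ K} (hg0 : g ≠ 0)
    {l₀ u₀ l₁ u₁ : ℤ} (hbox : ∀ e ∈ g.support, (l₀ ≤ e 0 ∧ e 0 ≤ u₀) ∧ (l₁ ≤ e 1 ∧ e 1 ≤ u₁))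
    (hu₁ : u₁ - l₁ < Fintype.card Kˣ) :
    ∃ y : Kˣ, (#{x : Kˣ | laurentEval g ![x, y] = 0} : ℤ) ≤ u₀ - l₀ := by
  obtain ⟨e₀, he₀⟩ := Finsupp.support_nonempty_iff.mpr hg0
  have hcoeff : ∑ e ∈ {e ∈ g.support | e 0 = e₀ 0} with e 1 = e₀ 1, g e ≠ 0 := by
    rw [filter_filter, sum_eq_single_of_mem e₀ (by simp [he₀])]
    · exact Finsupp.mem_support_iff.mp he₀
    · intro e he hne
      simp only [mem_filter] at he
      exact absurd (funext (Fin.forall_fin_two.mpr he.2)) hne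
  have hcol := card_filter_sum_mul_zpow_eq_zero_le (fun e he => (hbox e (mem_filter.mp he).1).2)
    hcoeff
  obtain ⟨y, hy⟩ : ∃ y : Kˣ, ∑ e ∈ g.support with e 0 = e₀ 0, g e * ((y ^ e 1 : Kˣ) : K) ≠ 0 := by
    by_contra! h
    rw [filter_true_of_mem fun y _ => h y, card_univ] at hcol
    omega
  refine ⟨y, ?_⟩
  simp only [laurentEval_pair]
  exact card_filter_sum_mul_zpow_eq_zero_le (fun e he => (hbox e he).1) hy

theorem card_laurentEval_eq_zero_le {g : (Fin 2 → ℤ) →₀ K} (hg0 : g ≠ 0)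
    {l₀ u₀ l₁ u₁ : ℤ} (hbox : ∀ e ∈ g.support, (l₀ ≤ e 0 ∧ e 0 ≤ u₀) ∧ (l₁ ≤ e 1 ∧ e 1 ≤ u₁))
    (hu₁ : u₁ - l₁ < Fintype.card Kˣ) :
    (Nat.card {P : Fin 2 → Kˣ | laurentEval g P = 0} : ℤ) ≤
      (Fintype.card Kˣ : ℤ) ^ 2 - Fintype.card Kˣ + (u₀ - l₀) := by
  obtain ⟨y, hy⟩ := exists_card_filter_laurentEval_eq_zero_le hg0 hbox hu₁
  have hinj : Function.Injective fun x : Kˣ => ![x, y] := fun x x' h => by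
    simpa using congrFun h 0
  have hcount := card_filter_add_card_filter_not_comp_le (laurentEval g · = 0) hinj
  have hline := card_filter_add_card_filter_not (s := univ) (laurentEval g ![·, y] = 0)
  rw [Nat.card_eq_fintype_card, Fintype.card_subtype]
  simp only [Set.mem_ofPred_eq]
  rw [Fintype.card_fun, Fintype.card_fin] at hcount
  rw [card_univ] at hline
  zify at hcount hline
  linarith

end TwoVariables

theorem add_one_le_of_mem_Hset_diff {q : ℕ} {a b : ℤ} (hba : b ≤ a) {m : Fin 2 → ℤ}
    (hm : m ∈ Hset q 2 \ {u : Fin 2 → ℤ | 0 ≤ u 1 ∧ u 1 ≤ (q : ℤ) - 2 ∧ 0 ≤ u 0 ∧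
        ((q : ℤ) - 2) * u 0 ≤ a * ((q : ℤ) - 2) + (b - a) * u 1}) :
    b + 1 ≤ m 0 := by
  obtain ⟨hmH, hmU⟩ := hm
  obtain ⟨⟨h0, -⟩, h1, h1'⟩ := And.intro (hmH 0) (hmH 1)
  by_contra! hm0
  refine hmU ⟨h1, h1', h0, ?_⟩
  nlinarith [mul_le_mul_of_nonneg_left (show m 0 ≤ b by omega) (show (0 : ℤ) ≤ q - 2 by omega),
    mul_le_mul_of_nonneg_left h1' (sub_nonneg.mpr hba)]

theorem stmt17_general {K : Type} [Field K] [Fintype K]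
    (q : ℕ) (hq : Fintype.card K = q)
    (a b : ℤ) (hba : b ≤ a)
    (U : Set (Fin 2 → ℤ))
    (hU : U = {u : Fin 2 → ℤ | 0 ≤ u 1 ∧ u 1 ≤ (q : ℤ) - 2 ∧ 0 ≤ u 0 ∧
        ((q : ℤ) - 2) * u 0 ≤ a * ((q : ℤ) - 2) + (b - a) * u 1})
    (g : (Fin 2 → ℤ) →₀ K)
    (hg : ↑g.support ⊆ (fun m => -m) '' (Hset q 2 \ U)) (hg0 : g ≠ 0) :
    (Nat.card {P : Fin 2 → Kˣ | laurentEval g P = 0} : ℤ) ≤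
      ((q : ℤ) - 1) ^ 2 - 1 - b := by
  classical
  subst hU
  have hbox : ∀ e ∈ g.support,
      (-((q : ℤ) - 2) ≤ e 0 ∧ e 0 ≤ -(b + 1)) ∧ (-((q : ℤ) - 2) ≤ e 1 ∧ e 1 ≤ 0) := by
    intro e he
    obtain ⟨m, hm, rfl⟩ := hg (mem_coe.mpr he)
    have := add_one_le_of_mem_Hset_diff hba hm
    have := hm.1 0
    have := hm.1 1
    simp only [Pi.neg_apply]
    omega
  have hunits : (Fintype.card Kˣ : ℤ) = q - 1 := by
    have : 0 < q := hq ▸ Fintype.card_pos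
    rw [Fintype.card_units, hq]
    omega
  have := card_laurentEval_eq_zero_le hg0 hbox (by omega)
  rw [hunits] at this
  linarith

/-- for `U` the lattice points of the polytope with vertices
`(0,0), (a,0), (b,q−2), (0,q−2)` (`0 ≤ b ≤ a ≤ q−2`) and `H = {0,…,q−2}²`,
every nonzero `g ∈ 𝔽_q<−H∖−U>` vanishes at no more than `(q−1)² − 1 − b`
torus points. -/
theorem stmt17 {K : Type} [Field K] [Fintype K]
    (q : ℕ) (hq : Fintype.card K = q) (hq3 : 3 ≤ q)
    (a b : ℤ) (hb : 0 ≤ b) (hba : b ≤ a) (ha : a ≤ (q : ℤ) - 2)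
    (U : Set (Fin 2 → ℤ))
    (hU : U = {u : Fin 2 → ℤ | 0 ≤ u 1 ∧ u 1 ≤ (q : ℤ) - 2 ∧ 0 ≤ u 0 ∧
        ((q : ℤ) - 2) * u 0 ≤ a * ((q : ℤ) - 2) + (b - a) * u 1})
    (g : (Fin 2 → ℤ) →₀ K)
    (hg : ↑g.support ⊆ (fun m => -m) '' (Hset q 2 \ U)) (hg0 : g ≠ 0) :
    (Nat.card {P : Fin 2 → Kˣ | laurentEval g P = 0} : ℤ) ≤
      ((q : ℤ) - 1) ^ 2 - 1 - b :=
  stmt17_general q hq a b hba U hU g hg hg0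
end
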